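/- arXiv:1612.00869 — 7 statements merged into one kernel-verified Lean document; each statement's English description precedes it below -/
import Mathlib

section
/- Let Q be a compact Hausdorff space, X = C(Q,ℝ), K the cone of nonnegative functions, and L : X → X a bounded linear map with L(K) ⊆ K. If there exists v ∈ K, v ≠ 0, and a real number α such that (Lv)(t) ≥ α v(t) for all t ∈ Q, then the spectral radius of L satisfies r(L) ≥ α. -/
/-!
Iterating `α • v ≤ L v` with the positivity of `L` gives `α ^ n • v ≤ L ^ n v`. Both sides are
nonnegative and the sup norm is monotone on the cone, so `α ^ n ‖v‖ ≤ ‖L ^ n‖ ‖v‖`, i.e.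
`α ≤ ‖L ^ n‖ ^ (1 / n)` for every `n ≥ 1`; pass to the limit.
-/

open Filter Topology

instance ContinuousMap.instHasSolidNorm {α β : Type*} [TopologicalSpace α] [CompactSpace α]
    [NormedAddCommGroup β] [Lattice β] [TopologicalLattice β] [HasSolidNorm β] :
    HasSolidNorm C(α, β) where
  solid f g h := (ContinuousMap.norm_le _ (norm_nonneg _)).2 fun t => by
    have hft : |f t| ≤ |g t| := by
      simpa only [ContinuousMap.abs_apply] using ContinuousMap.le_def.1 h t
    exact (HasSolidNorm.solid hft).trans (g.norm_coe_le_norm t)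

theorem norm_le_norm_of_nonneg_of_le {E : Type*} [NormedAddCommGroup E] [Lattice E]
    [HasSolidNorm E] [IsOrderedAddMonoid E] {a b : E} (ha : 0 ≤ a) (hab : a ≤ b) :
    ‖a‖ ≤ ‖b‖ :=
  norm_le_norm_of_abs_le_abs <| by rwa [abs_of_nonneg ha, abs_of_nonneg (ha.trans hab)]

theorem Module.End.smul_pow_le_pow_apply {E : Type*} [AddCommGroup E] [PartialOrder E]
    [IsOrderedAddMonoid E] [Module ℝ E] [PosSMulMono ℝ E] {L : Module.End ℝ E}
    (hL : ∀ f, 0 ≤ f → 0 ≤ L f) {α : ℝ} (hα : 0 ≤ α) {v : E} (hv : α • v ≤ L v) (n : ℕ) :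
    α ^ n • v ≤ (L ^ n) v := by
  induction n with
  | zero => simp
  | succ n ih =>
    have hmono : L (α ^ n • v) ≤ L ((L ^ n) v) := by
      simpa only [map_sub, sub_nonneg] using hL _ (sub_nonneg.2 ih)
    calc α ^ (n + 1) • v = α ^ n • (α • v) := by rw [pow_succ, mul_smul]
      _ ≤ α ^ n • L v := smul_le_smul_of_nonneg_left hv (pow_nonneg hα n)
      _ = L (α ^ n • v) := (map_smul L _ v).symm
      _ ≤ L ((L ^ n) v) := hmono
      _ = (L ^ (n + 1)) v := by rw [pow_succ', Module.End.mul_apply]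

theorem ContinuousLinearMap.pow_le_opNorm_pow_of_smul_le {E : Type*} [NormedAddCommGroup E]
    [Lattice E] [HasSolidNorm E] [IsOrderedAddMonoid E] [NormedSpace ℝ E] [PosSMulMono ℝ E]
    {L : E →L[ℝ] E} (hL : ∀ f, 0 ≤ f → 0 ≤ L f) {α : ℝ} (hα : 0 ≤ α) {v : E} (hv : 0 ≤ v)
    (hv0 : v ≠ 0) (hLv : α • v ≤ L v) (n : ℕ) : α ^ n ≤ ‖L ^ n‖ := by
  have hpow : α ^ n • v ≤ (L ^ n) v :=
    (Module.End.smul_pow_le_pow_apply (L := L.toLinearMap) hL hα hLv n).trans_eq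
      (LinearMap.congr_fun (L.toLinearMap_pow n) v).symm
  refine le_of_mul_le_mul_right ?_ (norm_pos_iff.2 hv0)
  calc α ^ n * ‖v‖ = ‖α ^ n • v‖ := by
        rw [norm_smul, Real.norm_of_nonneg (pow_nonneg hα n)]
    _ ≤ ‖(L ^ n) v‖ := norm_le_norm_of_nonneg_of_le (smul_nonneg (pow_nonneg hα n) hv) hpow
    _ ≤ ‖L ^ n‖ * ‖v‖ := (L ^ n).le_opNorm v

theorem Real.le_of_pow_le_of_tendsto_rpow {a r : ℝ} {b : ℕ → ℝ} (ha : 0 ≤ a)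
    (hab : ∀ n, a ^ n ≤ b n) (hb : Tendsto (fun n : ℕ => b n ^ ((1 : ℝ) / n)) atTop (𝓝 r)) :
    a ≤ r := by
  refine ge_of_tendsto hb ?_
  filter_upwards [eventually_ne_atTop 0] with n hn
  calc a = (a ^ n) ^ ((1 : ℝ) / n) := by rw [one_div, Real.pow_rpow_inv_natCast ha hn]
    _ ≤ b n ^ ((1 : ℝ) / n) := by gcongr; exact hab n

theorem stmt_1_general {Q : Type*} [TopologicalSpace Q] [CompactSpace Q]
    (L : C(Q, ℝ) →L[ℝ] C(Q, ℝ))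
    (hL : ∀ f : C(Q, ℝ), (∀ t, 0 ≤ f t) → ∀ t, 0 ≤ (L f) t)
    (v : C(Q, ℝ)) (hv : ∀ t, 0 ≤ v t) (hv0 : v ≠ 0)
    (α : ℝ) (hα : ∀ t, α * v t ≤ (L v) t)
    (r : ℝ)
    (hr : Filter.Tendsto (fun n : ℕ => ‖L ^ n‖ ^ ((1 : ℝ) / n)) Filter.atTop (nhds r)) :
    α ≤ r := by
  rcases le_or_gt α 0 with hα0 | hα0
  · exact hα0.trans (ge_of_tendsto' hr fun n => by positivity)
  · exact Real.le_of_pow_le_of_tendsto_rpow hα0.le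
      (ContinuousLinearMap.pow_le_opNorm_pow_of_smul_le hL hα0.le hv hv0 hα) hr

/-- If `L` is a positive bounded linear operator on `C(Q,ℝ)` (Q compact Hausdorff),
`v ∈ K`, `v ≠ 0`, and `L v ≥ α v` pointwise, then the spectral radius
`r(L) = lim ‖L^n‖^{1/n}` satisfies `r(L) ≥ α`. -/
theorem stmt_1 {Q : Type*} [TopologicalSpace Q] [CompactSpace Q] [T2Space Q]
    (L : C(Q, ℝ) →L[ℝ] C(Q, ℝ))
    (hL : ∀ f : C(Q, ℝ), (∀ t, 0 ≤ f t) → ∀ t, 0 ≤ (L f) t)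
    (v : C(Q, ℝ)) (hv : ∀ t, 0 ≤ v t) (hv0 : v ≠ 0)
    (α : ℝ) (hα : ∀ t, α * v t ≤ (L v) t)
    (r : ℝ)
    (hr : Filter.Tendsto (fun n : ℕ => ‖L ^ n‖ ^ ((1 : ℝ) / n)) Filter.atTop (nhds r)) :
    α ≤ r :=
  stmt_1_general L hL v hv hv0 α hα r hr
end

section
/- If M is an n × n real matrix with nonnegative entries, v ∈ ℝⁿ has all entries strictly positive, and Mv ≤ λv coordinatewise for some real λ, then the spectral radius of M is at most λ. Analogously, if v has all nonnegative entries with v ≠ 0 and Mv ≥ αv coordinatewise, then the spectral radius of M is at least α. -/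
/-! If `M x = μ x` with `x ≠ 0`, look at a coordinate `i` maximizing `‖x i‖ / v i =: c`:
then `‖μ‖ ‖x i‖ ≤ (M |x|) i ≤ c (M v) i ≤ λ c v i = λ ‖x i‖`, so every eigenvalue has modulus at
most `λ`. Conversely `α v ≤ M v` iterates to `αᵏ v ≤ Mᵏ v`; evaluated at the largest coordinate
of `v` this gives `αᵏ ≤ ‖Mᵏ‖` in the `ℓ∞` operator norm, and Gelfand's formula
`ρ(M) = lim ‖Mᵏ‖^(1/k)` yields `α ≤ ρ(M)`. -/

open Matrix Finset Filter
open scoped ENNReal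

attribute [local instance] Matrix.linftyOpNormedAddCommGroup Matrix.linftyOpNormedRing
  Matrix.linftyOpNormedAlgebra

namespace Matrix

variable {ι : Type*} [Fintype ι]

theorem exists_mulVec_eq_smul_of_mem_spectrum [DecidableEq ι] {K : Type*} [Field K]
    {A : Matrix ι ι K} {μ : K} (hμ : μ ∈ spectrum K A) : ∃ x ≠ 0, A *ᵥ x = μ • x := by
  rw [← spectrum_toLin', ← Module.End.hasEigenvalue_iff_mem_spectrum] at hμ
  obtain ⟨x, hx⟩ := hμ.exists_hasEigenvector
  exact ⟨x, hx.2, hx.apply_eq_smul⟩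

theorem mulVec_mono_of_nonneg {m R : Type*} [Semiring R] [PartialOrder R] [IsOrderedRing R]
    {M : Matrix m ι R} (hM : ∀ i j, 0 ≤ M i j) : Monotone (M *ᵥ ·) := fun _ _ huw i =>
  Finset.sum_le_sum fun j _ => mul_le_mul_of_nonneg_left (huw j) (hM i j)

theorem norm_map_ofReal_mulVec_le {m : Type*} {M : Matrix m ι ℝ} (hM : ∀ i j, 0 ≤ M i j)
    (x : ι → ℂ) (i : m) :
    ‖(M.map Complex.ofReal *ᵥ x) i‖ ≤ (M *ᵥ fun j => ‖x j‖) i := by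
  calc ‖∑ j, (M i j : ℂ) * x j‖ ≤ ∑ j, ‖(M i j : ℂ) * x j‖ := norm_sum_le _ _
    _ = ∑ j, M i j * ‖x j‖ := by
      simp only [norm_mul, Complex.norm_real, Real.norm_of_nonneg (hM _ _)]

theorem norm_eigenvalue_le_of_mulVec_le_smul {M : Matrix ι ι ℝ} (hM : ∀ i j, 0 ≤ M i j)
    {v : ι → ℝ} (hv : ∀ i, 0 < v i) {lam : ℝ} (hMv : M *ᵥ v ≤ lam • v) {μ : ℂ} {x : ι → ℂ}
    (hx : x ≠ 0) (hμ : M.map Complex.ofReal *ᵥ x = μ • x) : ‖μ‖ ≤ lam := by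
  obtain ⟨i₁, hi₁⟩ := Function.ne_iff.1 hx
  have : Nonempty ι := ⟨i₁⟩
  obtain ⟨i, -, hi⟩ := exists_max_image univ (fun j => ‖x j‖ / v j) univ_nonempty
  set c := ‖x i‖ / v i
  have hxc : (fun j => ‖x j‖) ≤ c • v := fun j => (div_le_iff₀ (hv j)).1 (hi j (mem_univ j))
  have hxi : 0 < ‖x i‖ := by
    have := (div_pos (norm_pos_iff.2 hi₁) (hv i₁)).trans_le (hi i₁ (mem_univ i₁))
    exact (div_pos_iff_of_pos_right (hv i)).1 this
  refine le_of_mul_le_mul_right ?_ hxi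
  calc ‖μ‖ * ‖x i‖ = ‖(M.map Complex.ofReal *ᵥ x) i‖ := by simp [hμ]
    _ ≤ (M *ᵥ fun j => ‖x j‖) i := norm_map_ofReal_mulVec_le hM x i
    _ ≤ (M *ᵥ c • v) i := mulVec_mono_of_nonneg hM hxc i
    _ = c * (M *ᵥ v) i := by rw [mulVec_smul, Pi.smul_apply, smul_eq_mul]
    _ ≤ c * (lam * v i) := mul_le_mul_of_nonneg_left (hMv i) (div_pos hxi (hv i)).le
    _ = lam * ‖x i‖ := by rw [mul_left_comm, div_mul_cancel₀ _ (hv i).ne']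

theorem pow_smul_le_pow_mulVec [DecidableEq ι] {R : Type*} [CommSemiring R] [PartialOrder R]
    [IsOrderedRing R] {M : Matrix ι ι R} (hM : ∀ i j, 0 ≤ M i j) {v : ι → R} {α : R}
    (hα : 0 ≤ α) (hMv : α • v ≤ M *ᵥ v) (k : ℕ) : α ^ k • v ≤ (M ^ k) *ᵥ v := by
  induction k with
  | zero => simp
  | succ k ih =>
    calc α ^ (k + 1) • v = α ^ k • (α • v) := by rw [pow_succ, mul_smul]
      _ ≤ α ^ k • (M *ᵥ v) := smul_le_smul_of_nonneg_left hMv (pow_nonneg hα k)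
      _ = M *ᵥ (α ^ k • v) := (mulVec_smul M _ v).symm
      _ ≤ M *ᵥ ((M ^ k) *ᵥ v) := mulVec_mono_of_nonneg hM ih
      _ = (M ^ (k + 1)) *ᵥ v := by rw [mulVec_mulVec, pow_succ']

theorem le_linfty_opNorm_of_smul_le_mulVec {B : Matrix ι ι ℝ} {v : ι → ℝ} (hv : 0 ≤ v)
    (hv₀ : v ≠ 0) {c : ℝ} (hBv : c • v ≤ B *ᵥ v) : c ≤ ‖B‖ := by
  obtain ⟨i₁, hi₁⟩ := Function.ne_iff.1 hv₀
  have : Nonempty ι := ⟨i₁⟩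
  obtain ⟨i, -, hi⟩ := exists_max_image univ v univ_nonempty
  have hvi : 0 < v i := ((hv i₁).lt_of_ne' hi₁).trans_le (hi i₁ (mem_univ i₁))
  have hnorm : ‖v‖ ≤ v i := (pi_norm_le_iff_of_nonneg hvi.le).2 fun j => by
    rw [Real.norm_of_nonneg (hv j)]; exact hi j (mem_univ j)
  refine le_of_mul_le_mul_right ?_ hvi
  calc c * v i ≤ (B *ᵥ v) i := hBv i
    _ ≤ ‖B *ᵥ v‖ := (le_abs_self _).trans (norm_le_pi_norm (B *ᵥ v) i)
    _ ≤ ‖B‖ * ‖v‖ := linfty_opNorm_mulVec B v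
    _ ≤ ‖B‖ * v i := mul_le_mul_of_nonneg_left hnorm (norm_nonneg B)

theorem linfty_opNorm_map_ofReal {m : Type*} [Fintype m] (B : Matrix m ι ℝ) : ‖B.map Complex.ofReal‖ = ‖B‖ := by
  simp [linfty_opNorm_def]

end Matrix

theorem ofReal_le_spectralRadius_of_pow_le_norm_pow {A : Type*} [NormedRing A] [NormedAlgebra ℂ A]
    [CompleteSpace A] {a : A} {c : ℝ} (hc : 0 ≤ c) (hca : ∀ k : ℕ, c ^ k ≤ ‖a ^ k‖) :
    ENNReal.ofReal c ≤ spectralRadius ℂ a := by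
  refine ge_of_tendsto (spectrum.pow_nnnorm_pow_one_div_tendsto_nhds_spectralRadius a) ?_
  filter_upwards [eventually_ne_atTop 0] with k hk
  calc ENNReal.ofReal c = ENNReal.ofReal (c ^ k) ^ (1 / (k : ℝ)) := by
        rw [ENNReal.ofReal_pow hc, ← ENNReal.rpow_natCast, ← ENNReal.rpow_mul,
          mul_one_div_cancel (Nat.cast_ne_zero.2 hk), ENNReal.rpow_one]
    _ ≤ (‖a ^ k‖₊ : ℝ≥0∞) ^ (1 / (k : ℝ)) := by
        gcongr
        rw [← enorm_eq_nnnorm, ← ofReal_norm]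
        exact ENNReal.ofReal_le_ofReal (hca k)

/-- For a nonnegative square real matrix `M`: if `v > 0` entrywise and `M v ≤ λ v`
coordinatewise then the spectral radius (sup of moduli of complex eigenvalues) is `≤ λ`;
if `v ≥ 0`, `v ≠ 0` and `M v ≥ α v` coordinatewise then the spectral radius is `≥ α`. -/
theorem stmt_2 {n : ℕ} (M : Matrix (Fin n) (Fin n) ℝ) (hM : ∀ i j, 0 ≤ M i j) :
    (∀ (v : Fin n → ℝ) (lam : ℝ), (∀ i, 0 < v i) →
      (∀ i, M.mulVec v i ≤ lam * v i) →
      spectralRadius ℂ (M.map (Complex.ofReal)) ≤ ENNReal.ofReal lam) ∧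
    (∀ (v : Fin n → ℝ) (α : ℝ), (∀ i, 0 ≤ v i) → v ≠ 0 →
      (∀ i, α * v i ≤ M.mulVec v i) →
      ENNReal.ofReal α ≤ spectralRadius ℂ (M.map (Complex.ofReal))) := by
  constructor
  · intro v lam hv hMv
    refine iSup₂_le fun μ hμ => ?_
    obtain ⟨x, hx, hμx⟩ := exists_mulVec_eq_smul_of_mem_spectrum hμ
    rw [← enorm_eq_nnnorm, ← ofReal_norm]
    exact ENNReal.ofReal_le_ofReal
      (norm_eigenvalue_le_of_mulVec_le_smul hM hv (fun i => hMv i) hx hμx)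
  · intro v α hv hv₀ hαv
    rcases le_or_gt α 0 with hα | hα
    · simp [ENNReal.ofReal_eq_zero.2 hα]
    refine ofReal_le_spectralRadius_of_pow_le_norm_pow hα.le fun k => ?_
    rw [show M.map Complex.ofReal ^ k = (M ^ k).map Complex.ofReal from
      (M.map_pow Complex.ofRealHom k).symm, linfty_opNorm_map_ofReal]
    exact le_linfty_opNorm_of_smul_le_mulVec hv hv₀
      (pow_smul_le_pow_mulVec hM hα.le (fun i => hαv i) k)
end

section
/- Let Q be a compact Hausdorff space, X = C(Q,ℝ), K the nonnegative cone, and let L₁, L₂ : X → X be bounded linear maps with Lⱼ(K) ⊆ K for j = 1,2 and L₁(f) ≤ L₂(f) pointwise for all f ∈ K. Then r(L₁) ≤ r(L₂). -/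
/-!
A positive operator `A` satisfies `|A f| ≤ A |f|`, so if `0 ≤ A ≤ B` on the positive cone of a
normed lattice then `|A f| ≤ B |f|`, and solidity of the norm gives `‖A‖ ≤ ‖B‖`. The hypotheses
pass to powers, hence `‖L₁ ^ n‖ ^ (1 / n) ≤ ‖L₂ ^ n‖ ^ (1 / n)` for every `n`, and the inequality
survives in the limit.
-/

namespace ContinuousMap

variable {α β : Type*} [TopologicalSpace α] [CompactSpace α]
  [NormedAddCommGroup β] [Lattice β] [HasSolidNorm β] [IsOrderedAddMonoid β]

instance instHasSolidNorm_s3 : HasSolidNorm C(α, β) where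
  solid f g h := (norm_le f (norm_nonneg g)).2 fun t =>
    (HasSolidNorm.solid (le_def.1 h t)).trans (g.norm_coe_le_norm t)

end ContinuousMap

section PositiveOperator

variable {E F : Type*} [FunLike F E E] {A B : F}

theorem monotone_coe_pow [Preorder E] [Monoid F] [IsMulApplyEqComp F E] [IsOneApplyEqSelf F E]
    (hA : Monotone A) (n : ℕ) : Monotone ⇑(A ^ n) := by
  rw [FunLike.coe_pow_eq_iterate]
  exact hA.iterate n

variable [AddCommGroup E] [Lattice E] [AddMonoidHomClass F E E]

theorem abs_map_le_map_abs (hA : Monotone A) (f : E) : |A f| ≤ A |f| :=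
  abs_le'.2 ⟨hA (le_abs_self f), by rw [← map_neg]; exact hA (neg_le_abs f)⟩

variable [IsOrderedAddMonoid E] [Monoid F] [IsMulApplyEqComp F E] [IsOneApplyEqSelf F E]

theorem pow_apply_le_pow_apply_of_nonneg (hA : Monotone A) (hAB : ∀ f, 0 ≤ f → A f ≤ B f)
    (n : ℕ) {f : E} (hf : 0 ≤ f) : (A ^ n) f ≤ (B ^ n) f := by
  induction n with
  | zero => rw [pow_zero, pow_zero]
  | succ n ih =>
    have hAn : 0 ≤ (A ^ n) f := (monotone_iff_map_nonneg (A ^ n)).1 (monotone_coe_pow hA n) f hf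
    rw [pow_succ', pow_succ', mul_apply_eq_comp, mul_apply_eq_comp]
    exact (hA ih).trans (hAB _ (hAn.trans ih))

end PositiveOperator

namespace ContinuousLinearMap

variable {𝕜 E : Type*} [NontriviallyNormedField 𝕜] [NormedAddCommGroup E] [Lattice E]
  [HasSolidNorm E] [IsOrderedAddMonoid E] [NormedSpace 𝕜 E] {A B : E →L[𝕜] E}

theorem opNorm_le_opNorm_of_le_of_nonneg (hA : Monotone A)
    (hAB : ∀ f, 0 ≤ f → A f ≤ B f) : ‖A‖ ≤ ‖B‖ := by
  refine A.opNorm_le_bound (norm_nonneg B) fun f => ?_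
  have hAf : |A f| ≤ B |f| := (abs_map_le_map_abs hA f).trans (hAB _ (abs_nonneg f))
  have hBf : 0 ≤ B |f| := (abs_nonneg _).trans hAf
  calc ‖A f‖ ≤ ‖B |f|‖ := norm_le_norm_of_abs_le_abs (by rwa [abs_of_nonneg hBf])
    _ ≤ ‖B‖ * ‖|f|‖ := B.le_opNorm _
    _ = ‖B‖ * ‖f‖ := by rw [norm_abs_eq_norm]

theorem opNorm_pow_le_opNorm_pow_of_le_of_nonneg (hA : Monotone A)
    (hAB : ∀ f, 0 ≤ f → A f ≤ B f) (n : ℕ) : ‖A ^ n‖ ≤ ‖B ^ n‖ :=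
  opNorm_le_opNorm_of_le_of_nonneg (monotone_coe_pow hA n) fun _ hf =>
    pow_apply_le_pow_apply_of_nonneg hA hAB n hf

end ContinuousLinearMap

theorem stmt_3_general {Q : Type*} [TopologicalSpace Q] [CompactSpace Q]
    (L₁ L₂ : C(Q, ℝ) →L[ℝ] C(Q, ℝ))
    (hL₁ : ∀ f : C(Q, ℝ), (∀ t, 0 ≤ f t) → ∀ t, 0 ≤ (L₁ f) t)
    (hle : ∀ f : C(Q, ℝ), (∀ t, 0 ≤ f t) → ∀ t, (L₁ f) t ≤ (L₂ f) t)
    (r₁ r₂ : ℝ)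
    (hr₁ : Filter.Tendsto (fun n : ℕ => ‖L₁ ^ n‖ ^ ((1 : ℝ) / n)) Filter.atTop (nhds r₁))
    (hr₂ : Filter.Tendsto (fun n : ℕ => ‖L₂ ^ n‖ ^ ((1 : ℝ) / n)) Filter.atTop (nhds r₂)) :
    r₁ ≤ r₂ := by
  have hmono : Monotone L₁ := (monotone_iff_map_nonneg L₁).2 fun f hf =>
    ContinuousMap.le_def.2 (hL₁ f (ContinuousMap.le_def.1 hf))
  have hdom : ∀ f, 0 ≤ f → L₁ f ≤ L₂ f := fun f hf =>
    ContinuousMap.le_def.2 (hle f (ContinuousMap.le_def.1 hf))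
  refine le_of_tendsto_of_tendsto' hr₁ hr₂ fun n => ?_
  exact Real.rpow_le_rpow (norm_nonneg (L₁ ^ n))
    (ContinuousLinearMap.opNorm_pow_le_opNorm_pow_of_le_of_nonneg hmono hdom n) (by positivity)

/-- If `L₁, L₂` are positive bounded linear operators on `C(Q,ℝ)` with `L₁ f ≤ L₂ f`
pointwise for all `f ≥ 0`, then `r(L₁) ≤ r(L₂)`, where `r(L) = lim ‖L^n‖^{1/n}`. -/
theorem stmt_3 {Q : Type*} [TopologicalSpace Q] [CompactSpace Q] [T2Space Q]
    (L₁ L₂ : C(Q, ℝ) →L[ℝ] C(Q, ℝ))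
    (hL₁ : ∀ f : C(Q, ℝ), (∀ t, 0 ≤ f t) → ∀ t, 0 ≤ (L₁ f) t)
    (hL₂ : ∀ f : C(Q, ℝ), (∀ t, 0 ≤ f t) → ∀ t, 0 ≤ (L₂ f) t)
    (hle : ∀ f : C(Q, ℝ), (∀ t, 0 ≤ f t) → ∀ t, (L₁ f) t ≤ (L₂ f) t)
    (r₁ r₂ : ℝ)
    (hr₁ : Filter.Tendsto (fun n : ℕ => ‖L₁ ^ n‖ ^ ((1 : ℝ) / n)) Filter.atTop (nhds r₁))
    (hr₂ : Filter.Tendsto (fun n : ℕ => ‖L₂ ^ n‖ ^ ((1 : ℝ) / n)) Filter.atTop (nhds r₂)) :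
    r₁ ≤ r₂ :=
  stmt_3_general L₁ L₂ hL₁ hle r₁ r₂ hr₁ hr₂
end

section
/- Let b₁, b₂ be complex numbers with Re(bⱼ) ≥ γ ≥ 1 for j = 1,2, and define ψⱼ(z) = 1/(z + bⱼ) and θ = ψ₁ ∘ ψ₂. Then for all complex z, w with Re(z) ≥ 0 and Re(w) ≥ 0, |θ(z) − θ(w)| ≤ (γ² + 1)⁻² · |z − w|. -/
/-!
With `u = z + b₂` we have `θ(z) = u / (1 + u b₁)`, so
`θ(z) - θ(w) = (z - w) / ((1 + u b₁)(1 + v b₁))` with `v = w + b₂`, and it suffices to show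
`|1 + u b| ≥ γ² + 1` whenever `Re u, Re b ≥ γ ≥ 1`. Taking real parts in
`conj u · (1 + u b) = conj u + |u|² b` gives `|u| |1 + u b| ≥ γ (1 + |u|²)`, and
`γ (1 + t²) ≥ (γ² + 1) t` for `1 ≤ γ ≤ t`, where `t = |u| ≥ Re u ≥ γ`.
-/

open Complex ComplexConjugate

lemma one_add_sq_mul_le {γ t : ℝ} (hγ : 1 ≤ γ) (ht : γ ≤ t) :
    (γ ^ 2 + 1) * t ≤ γ * (1 + t ^ 2) := by
  nlinarith [mul_nonneg (sub_nonneg.mpr ht) (by nlinarith : (0 : ℝ) ≤ γ * t - 1)]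

lemma one_add_sq_le_norm_one_add_mul {γ : ℝ} (hγ : 1 ≤ γ) {u b : ℂ}
    (hu : γ ≤ u.re) (hb : γ ≤ b.re) : γ ^ 2 + 1 ≤ ‖1 + u * b‖ := by
  have ht : γ ≤ ‖u‖ := hu.trans (re_le_norm u)
  have hpos : 0 < ‖u‖ := by linarith
  have hre : (conj u * (1 + u * b)).re = u.re + ‖u‖ ^ 2 * b.re := by
    rw [mul_add, mul_one, ← mul_assoc, mul_comm (conj u), mul_conj, normSq_eq_norm_sq, add_re,
      conj_re, re_ofReal_mul]
  have hlower : γ * (1 + ‖u‖ ^ 2) ≤ ‖u‖ * ‖1 + u * b‖ := calc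
    γ * (1 + ‖u‖ ^ 2) ≤ u.re + ‖u‖ ^ 2 * b.re := by nlinarith
    _ = (conj u * (1 + u * b)).re := hre.symm
    _ ≤ ‖conj u * (1 + u * b)‖ := re_le_norm _
    _ = ‖u‖ * ‖1 + u * b‖ := by rw [norm_mul, norm_conj]
  have hmul := (one_add_sq_mul_le hγ ht).trans hlower
  rw [mul_comm ‖u‖] at hmul
  exact le_of_mul_le_mul_right hmul hpos

lemma one_div_one_div_add {K : Type*} [Field K] {u : K} (hu : u ≠ 0) (b : K) :
    1 / (1 / u + b) = u / (1 + u * b) := by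
  rw [div_add' _ _ _ hu, one_div_div, mul_comm b]

lemma div_one_add_mul_sub {K : Type*} [Field K] {u v b : K}
    (hu : 1 + u * b ≠ 0) (hv : 1 + v * b ≠ 0) :
    u / (1 + u * b) - v / (1 + v * b) = (u - v) / ((1 + u * b) * (1 + v * b)) := by
  rw [div_sub_div _ _ hu hv]
  ring

lemma norm_div_mul_le {K : Type*} [NormedField K] {c : ℝ} (hc : 0 < c) {x A B : K}
    (hA : c ≤ ‖A‖) (hB : c ≤ ‖B‖) : ‖x / (A * B)‖ ≤ (c ^ 2)⁻¹ * ‖x‖ := by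
  rw [norm_div, norm_mul, div_eq_inv_mul, sq]
  gcongr

/-- If `Re(b₁), Re(b₂) ≥ γ ≥ 1`, `ψⱼ(z) = 1/(z+bⱼ)`, `θ = ψ₁ ∘ ψ₂`, then for
`Re z, Re w ≥ 0` we have `|θ(z) − θ(w)| ≤ (γ²+1)⁻² |z−w|`. -/
theorem stmt_4 (γ : ℝ) (hγ : 1 ≤ γ) (b₁ b₂ : ℂ)
    (h1 : γ ≤ b₁.re) (h2 : γ ≤ b₂.re)
    (z w : ℂ) (hz : 0 ≤ z.re) (hw : 0 ≤ w.re) :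
    ‖(1 / (1 / (z + b₂) + b₁)) - (1 / (1 / (w + b₂) + b₁))‖
      ≤ ((γ ^ 2 + 1) ^ 2)⁻¹ * ‖z - w‖ := by
  have hu : γ ≤ (z + b₂).re := by rw [add_re]; linarith
  have hv : γ ≤ (w + b₂).re := by rw [add_re]; linarith
  have hU := one_add_sq_le_norm_one_add_mul hγ hu h1
  have hV := one_add_sq_le_norm_one_add_mul hγ hv h1
  have hc : (0 : ℝ) < γ ^ 2 + 1 := by positivity
  have hU0 : 1 + (z + b₂) * b₁ ≠ 0 := norm_pos_iff.mp (hc.trans_le hU)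
  have hV0 : 1 + (w + b₂) * b₁ ≠ 0 := norm_pos_iff.mp (hc.trans_le hV)
  rw [one_div_one_div_add (ne_zero_of_re_pos (by linarith)),
    one_div_one_div_add (ne_zero_of_re_pos (by linarith)), div_one_add_mul_sub hU0 hV0,
    add_sub_add_right_eq_sub]
  exact norm_div_mul_le hc hU hV
end

section
/- Let (b_j)_{j≥1} be complex numbers with Re(b_j) ≥ γ > 0 for all j. Define B₀ = 1, B₁ = b₁, and B_{n+1} = B_{n−1} + b_{n+1} B_n for n ≥ 1. Then B_n ≠ 0 and Re(B_n / B_{n−1}) ≥ γ for all n ≥ 1. -/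
/-!
Writing `w_n = B_n / B_{n-1}`, the recursion reads `w_{n+1} = 1 / w_n + b_{n+1}`. Inversion
preserves the closed right half-plane, so `Re w_n ≥ γ` propagates by induction, and
`Re w_n ≥ γ > 0` forces `B_n ≠ 0`.
-/

namespace Complex

theorem inv_re_nonneg {w : ℂ} (hw : 0 ≤ w.re) : 0 ≤ w⁻¹.re := by
  rw [inv_re]
  exact div_nonneg hw (normSq_nonneg w)

theorem ne_zero_of_le_re_div {γ : ℝ} (hγ : 0 < γ) {z w : ℂ} (h : γ ≤ (z / w).re) : z ≠ 0 := by
  rintro rfl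
  rw [zero_div, zero_re] at h
  linarith

theorem add_mul_div_eq_inv_div_add {x : ℂ} (hx : x ≠ 0) (y a : ℂ) :
    (y + a * x) / x = (x / y)⁻¹ + a := by
  rw [inv_div, add_div, mul_div_cancel_right₀ a hx]

theorem le_re_add_mul_div {γ : ℝ} {x y a : ℂ} (hx : x ≠ 0) (hxy : 0 ≤ (x / y).re)
    (ha : γ ≤ a.re) : γ ≤ ((y + a * x) / x).re := by
  rw [add_mul_div_eq_inv_div_add hx, add_re]
  linarith [inv_re_nonneg hxy]

end Complex

/-- If `Re(b_j) ≥ γ > 0` and `B₀ = 1`, `B₁ = b₁`, `B_{n+1} = B_{n−1} + b_{n+1} B_n`,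
then `B_n ≠ 0` and `Re(B_n / B_{n−1}) ≥ γ` for all `n ≥ 1`. -/
theorem stmt_6 (γ : ℝ) (hγ : 0 < γ) (b : ℕ → ℂ) (hb : ∀ j, 1 ≤ j → γ ≤ (b j).re)
    (B : ℕ → ℂ) (hB0 : B 0 = 1) (hB1 : B 1 = b 1)
    (hBrec : ∀ n, 1 ≤ n → B (n + 1) = B (n - 1) + b (n + 1) * B n) :
    ∀ n, 1 ≤ n → B n ≠ 0 ∧ γ ≤ (B n / B (n - 1)).re := by
  suffices h : ∀ n, 1 ≤ n → γ ≤ (B n / B (n - 1)).re from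
    fun n hn => ⟨Complex.ne_zero_of_le_re_div hγ (h n hn), h n hn⟩
  intro n hn
  induction n, hn using Nat.le_induction with
  | base => simpa [hB0, hB1] using hb 1 le_rfl
  | succ m hm ih =>
    rw [Nat.add_sub_cancel, hBrec m hm]
    exact Complex.le_re_add_mul_div (Complex.ne_zero_of_le_re_div hγ ih) (hγ.le.trans ih)
      (hb (m + 1) (by omega))
end

section
/- Let γ > 0, s > 0, u ≥ γ, and v ∈ ℝ. With G(u,v;s) = (u²+v²)^{−s}, the second pure u-derivative satisfies −s/(4γ²(s+1)) · G(u,v;s) ≤ ∂_u² G(u,v;s) ≤ (2s(2s+1)/γ²) · G(u,v;s). -/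
/-! The second derivative is `2s((2s+1)u² − v²)(u²+v²)^(−s−2)`, so after factoring out
`(u²+v²)^(−s−2) > 0` both bounds become polynomial inequalities in `a = u² ≥ γ²` and `b = v²`.
The upper one follows from `γ²a ≤ a² ≤ (a+b)²`; the lower one is only an issue when
`b > (2s+1)a`, and there `γ² ≤ a` reduces it to
`(a+b)² − 8a(s+1)(b − (2s+1)a) = (b − (4s+3)a)² ≥ 0`. -/

open Real Filter Topology

theorem hasDerivAt_sq_add_rpow {c p x : ℝ} (hx : x ^ 2 + c ≠ 0) :
    HasDerivAt (fun y : ℝ => (y ^ 2 + c) ^ p) (2 * p * x * (x ^ 2 + c) ^ (p - 1)) x := by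
  convert ((hasDerivAt_pow 2 x).add_const c).rpow_const (Or.inl hx) using 1
  push_cast
  ring

theorem deriv_iterate_two_sq_add_rpow {c p x : ℝ} (hx : x ^ 2 + c ≠ 0) :
    deriv^[2] (fun y : ℝ => (y ^ 2 + c) ^ p) x
      = 2 * p * ((2 * p - 1) * x ^ 2 + c) * (x ^ 2 + c) ^ (p - 2) := by
  have hderiv : deriv (fun y : ℝ => (y ^ 2 + c) ^ p) =ᶠ[𝓝 x]
      fun y => 2 * p * y * (y ^ 2 + c) ^ (p - 1) := by
    have hopen : IsOpen {y : ℝ | y ^ 2 + c ≠ 0} :=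
      isOpen_ne_fun (by fun_prop) continuous_const
    filter_upwards [hopen.mem_nhds hx] with y hy
    exact (hasDerivAt_sq_add_rpow hy).deriv
  rw [Function.iterate_succ_apply, Function.iterate_one, hderiv.deriv_eq,
    (((hasDerivAt_id' x).const_mul (2 * p)).fun_mul (hasDerivAt_sq_add_rpow hx)).deriv,
    show p - 1 - 1 = p - 2 by ring, show p - 1 = p - 2 + 1 by ring, rpow_add_one hx]
  ring

theorem neg_div_mul_sq_add_le {γ s a : ℝ} (b : ℝ) (hγ : 0 < γ) (hs : 0 ≤ s) (ha : γ ^ 2 ≤ a) :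
    -(s / (4 * γ ^ 2 * (s + 1))) * (a + b) ^ 2 ≤ 2 * s * ((2 * s + 1) * a - b) := by
  have hden : 0 < 4 * γ ^ 2 * (s + 1) := by positivity
  rw [neg_mul, div_mul_eq_mul_div, neg_le, ← neg_mul, ← neg_mul, le_div_iff₀ hden]
  rcases le_or_gt b ((2 * s + 1) * a) with hd | hd
  · nlinarith [mul_nonneg hs (sq_nonneg (a + b)),
      mul_nonneg (mul_nonneg hs hden.le) (sub_nonneg.2 hd)]
  · have key : 8 * a * (s + 1) * (b - (2 * s + 1) * a) ≤ (a + b) ^ 2 := by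
      linear_combination sq_nonneg (b - (4 * s + 3) * a)
    nlinarith [mul_nonneg (mul_nonneg hs (by linarith : (0:ℝ) ≤ s + 1))
      (mul_nonneg (sub_nonneg.2 ha) (sub_pos.2 hd).le), mul_le_mul_of_nonneg_left key hs]

theorem mul_sub_le_div_mul_sq_add {γ s a b : ℝ} (hγ : 0 < γ) (hs : 0 ≤ s) (ha : γ ^ 2 ≤ a)
    (hb : 0 ≤ b) :
    2 * s * ((2 * s + 1) * a - b) ≤ 2 * s * (2 * s + 1) / γ ^ 2 * (a + b) ^ 2 := by
  have hγa : γ ^ 2 * a ≤ (a + b) ^ 2 := by nlinarith [sq_nonneg γ]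
  calc 2 * s * ((2 * s + 1) * a - b) ≤ 2 * s * (2 * s + 1) * a := by nlinarith
    _ ≤ 2 * s * (2 * s + 1) * ((a + b) ^ 2 / γ ^ 2) := by
        gcongr
        rwa [le_div_iff₀ (by positivity), mul_comm]
    _ = 2 * s * (2 * s + 1) / γ ^ 2 * (a + b) ^ 2 := by ring

/-- For `u ≥ γ > 0`, `s > 0`, `G(u,v;s) = (u²+v²)^{−s}`:
`−s/(4γ²(s+1))·G ≤ ∂_u²G ≤ 2s(2s+1)/γ²·G`. -/
theorem stmt_13 (γ s u v : ℝ) (hγ : 0 < γ) (hs : 0 < s) (hu : γ ≤ u) :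
    -(s / (4 * γ ^ 2 * (s + 1))) * (u ^ 2 + v ^ 2) ^ (-s)
        ≤ deriv^[2] (fun u' => (u' ^ 2 + v ^ 2) ^ (-s)) u
      ∧ deriv^[2] (fun u' => (u' ^ 2 + v ^ 2) ^ (-s)) u
        ≤ (2 * s * (2 * s + 1) / γ ^ 2) * (u ^ 2 + v ^ 2) ^ (-s) := by
  have hu2 : γ ^ 2 ≤ u ^ 2 := pow_le_pow_left₀ hγ.le hu 2
  have hr : 0 < u ^ 2 + v ^ 2 := by nlinarith [sq_nonneg v, sq_nonneg γ]
  have hG : (u ^ 2 + v ^ 2) ^ (-s) = (u ^ 2 + v ^ 2) ^ 2 * (u ^ 2 + v ^ 2) ^ (-s - 2) := by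
    rw [mul_comm, ← rpow_add_natCast hr.ne']
    norm_num
  rw [deriv_iterate_two_sq_add_rpow hr.ne', hG]
  constructor
  · linear_combination (u ^ 2 + v ^ 2) ^ (-s - 2) *
      neg_div_mul_sq_add_le (v ^ 2) hγ hs.le hu2
  · linear_combination (u ^ 2 + v ^ 2) ^ (-s - 2) *
      mul_sub_le_div_mul_sq_add hγ hs.le hu2 (sq_nonneg v)
end

section
/- Let γ > 0, s > 0, u ≥ γ, and v ∈ ℝ. With G(u,v;s) = (u²+v²)^{−s}, the fourth pure u-derivative satisfies −(2s(2s+2)·3(s+1)/γ⁴)·G(u,v;s) ≤ ∂_u⁴ G(u,v;s) ≤ (2s(2s+1)(2s+2)(2s+3)/γ⁴)·G(u,v;s). -/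
/-!
Differentiating `p(x) (x² + c)^a` gives `(p'(x) (x² + c) + 2a x p(x)) (x² + c)^(a-1)`, so the
`n`-th derivative of `(x² + c)^a` is a polynomial times `(x² + c)^(a-n)`; for `n = 4`, `a = -s`,
`c = v²` it is `2s(2s+2) q(u,v) (u² + v²)^(-s-4)` with the quartic
`q = (2s+1)(2s+3)u⁴ - 6(2s+3)u²v² + 3v⁴`. Sum-of-squares identities give
`-3(s+1)(u²+v²)² ≤ q ≤ (2s+1)(2s+3)(u²+v²)²`, and `(u²+v²)^(-s-2) ≤ γ⁻⁴ (u²+v²)^(-s)` because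
`u² + v² ≥ γ²`.
-/

open Polynomial Set

noncomputable def sqAddRpowDerivNumerator (c a : ℝ) : ℕ → ℝ[X]
  | 0 => 1
  | n + 1 => derivative (sqAddRpowDerivNumerator c a n) * (X ^ 2 + C c)
      + C (2 * (a - n)) * X * sqAddRpowDerivNumerator c a n

theorem Polynomial.hasDerivAt_eval_mul_sq_add_rpow (p : ℝ[X]) {c a x : ℝ} (hx : x ^ 2 + c ≠ 0) :
    HasDerivAt (fun y => p.eval y * (y ^ 2 + c) ^ a)
      ((derivative p * (X ^ 2 + C c) + C (2 * a) * X * p).eval x * (x ^ 2 + c) ^ (a - 1)) x := by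
  have hQ : HasDerivAt (fun y : ℝ => y ^ 2 + c) (2 * x) x := by
    simpa using (hasDerivAt_pow 2 x).add_const c
  refine ((p.hasDerivAt x).mul (hQ.rpow_const (p := a) (Or.inl hx))).congr_deriv ?_
  rw [← sub_add_cancel a 1, Real.rpow_add_one hx, add_sub_cancel_right]
  simp only [eval_add, eval_mul, eval_pow, eval_X, eval_C]
  ring

theorem iterate_deriv_sq_add_rpow_eqOn (c a : ℝ) (n : ℕ) :
    EqOn (deriv^[n] fun x => (x ^ 2 + c) ^ a)
      (fun x => (sqAddRpowDerivNumerator c a n).eval x * (x ^ 2 + c) ^ (a - n))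
      {x | x ^ 2 + c ≠ 0} := by
  induction n with
  | zero => intro x _; simp [sqAddRpowDerivNumerator]
  | succ n ih =>
    intro x hx
    have hopen : IsOpen {x : ℝ | x ^ 2 + c ≠ 0} := isOpen_ne_fun (by fun_prop) continuous_const
    rw [Function.iterate_succ_apply', ih.deriv hopen hx,
      ((sqAddRpowDerivNumerator c a n).hasDerivAt_eval_mul_sq_add_rpow hx).deriv]
    push_cast
    rw [sub_sub, sqAddRpowDerivNumerator]

theorem iterate_deriv_four_sq_add_sq_rpow_neg (s v x : ℝ) (hx : x ^ 2 + v ^ 2 ≠ 0) :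
    deriv^[4] (fun x => (x ^ 2 + v ^ 2) ^ (-s)) x
      = 2 * s * (2 * s + 2) * ((2 * s + 1) * (2 * s + 3) * x ^ 4
          - 6 * (2 * s + 3) * x ^ 2 * v ^ 2 + 3 * v ^ 4) * (x ^ 2 + v ^ 2) ^ (-s - 4) := by
  rw [iterate_deriv_sq_add_rpow_eqOn (v ^ 2) (-s) 4 hx, Nat.cast_ofNat]
  simp only [sqAddRpowDerivNumerator, derivative_mul, derivative_add, derivative_X_pow,
    derivative_C, derivative_X, derivative_one, eval_add, eval_mul, eval_pow, eval_X, eval_C,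
    eval_one, eval_zero, derivative_zero, Nat.cast_ofNat, Nat.cast_zero, Nat.cast_one]
  ring

theorem neg_mul_sq_le_quartic {s : ℝ} (hs : 0 ≤ s) (x v : ℝ) :
    -(3 * (s + 1)) * (x ^ 2 + v ^ 2) ^ 2
      ≤ (2 * s + 1) * (2 * s + 3) * x ^ 4 - 6 * (2 * s + 3) * x ^ 2 * v ^ 2 + 3 * v ^ 4 := by
  have key : (2 * s + 1) * (2 * s + 3) * x ^ 4 - 6 * (2 * s + 3) * x ^ 2 * v ^ 2 + 3 * v ^ 4
      + 3 * (s + 1) * (x ^ 2 + v ^ 2) ^ 2 = (s + 2) * (3 * (x ^ 2 - v ^ 2) ^ 2 + 4 * s * x ^ 4) := by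
    ring
  linarith [key, show 0 ≤ (s + 2) * (3 * (x ^ 2 - v ^ 2) ^ 2 + 4 * s * x ^ 4) by positivity]

theorem quartic_le_mul_sq {s : ℝ} (hs : 0 ≤ s) (x v : ℝ) :
    (2 * s + 1) * (2 * s + 3) * x ^ 4 - 6 * (2 * s + 3) * x ^ 2 * v ^ 2 + 3 * v ^ 4
      ≤ (2 * s + 1) * (2 * s + 3) * (x ^ 2 + v ^ 2) ^ 2 := by
  have key : (2 * s + 1) * (2 * s + 3) * (x ^ 2 + v ^ 2) ^ 2
      - ((2 * s + 1) * (2 * s + 3) * x ^ 4 - 6 * (2 * s + 3) * x ^ 2 * v ^ 2 + 3 * v ^ 4)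
      = 4 * (s + 2) * ((2 * s + 3) * x ^ 2 * v ^ 2 + s * v ^ 4) := by
    ring
  linarith [key, show 0 ≤ 4 * (s + 2) * ((2 * s + 3) * x ^ 2 * v ^ 2 + s * v ^ 4) by positivity]

theorem sq_mul_rpow_sub_four_le_rpow_div {A γ : ℝ} (t : ℝ) (hγ : 0 < γ) (hA : γ ^ 2 ≤ A) :
    A ^ 2 * A ^ (t - 4) ≤ A ^ t / γ ^ 4 := by
  have hA0 : 0 < A := (pow_pos hγ 2).trans_le hA
  have hγA : γ ^ 4 ≤ A ^ 2 := by
    calc γ ^ 4 = (γ ^ 2) ^ 2 := by ring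
      _ ≤ A ^ 2 := by gcongr
  calc A ^ 2 * A ^ (t - 4) = A ^ t / A ^ 2 := by
        rw [Real.rpow_sub hA0, Real.rpow_ofNat]
        field_simp
    _ ≤ A ^ t / γ ^ 4 := by gcongr

/-- For `u ≥ γ > 0`, `s > 0`, `G(u,v;s) = (u²+v²)^{−s}`:
`−(2s(2s+2)·3(s+1)/γ⁴)·G ≤ ∂_u⁴G ≤ (2s(2s+1)(2s+2)(2s+3)/γ⁴)·G`. -/
theorem stmt_16 (γ s u v : ℝ) (hγ : 0 < γ) (hs : 0 < s) (hu : γ ≤ u) :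
    -((2 * s * (2 * s + 2) * (3 * (s + 1))) / γ ^ 4) * (u ^ 2 + v ^ 2) ^ (-s)
        ≤ deriv^[4] (fun u' => (u' ^ 2 + v ^ 2) ^ (-s)) u
      ∧ deriv^[4] (fun u' => (u' ^ 2 + v ^ 2) ^ (-s)) u
        ≤ ((2 * s * (2 * s + 1) * (2 * s + 2) * (2 * s + 3)) / γ ^ 4)
            * (u ^ 2 + v ^ 2) ^ (-s) := by
  have hγA : γ ^ 2 ≤ u ^ 2 + v ^ 2 := by nlinarith [sq_nonneg v]
  rw [iterate_deriv_four_sq_add_sq_rpow_neg s v u ((pow_pos hγ 2).trans_le hγA).ne']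
  have hpow := sq_mul_rpow_sub_four_le_rpow_div (-s) hγ hγA
  constructor
  · calc -((2 * s * (2 * s + 2) * (3 * (s + 1))) / γ ^ 4) * (u ^ 2 + v ^ 2) ^ (-s)
        = -(2 * s * (2 * s + 2) * (3 * (s + 1))) * ((u ^ 2 + v ^ 2) ^ (-s) / γ ^ 4) := by ring
      _ ≤ -(2 * s * (2 * s + 2) * (3 * (s + 1)))
            * ((u ^ 2 + v ^ 2) ^ 2 * (u ^ 2 + v ^ 2) ^ (-s - 4)) :=
          mul_le_mul_of_nonpos_left hpow (neg_nonpos.mpr (by positivity))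
      _ = 2 * s * (2 * s + 2) * (-(3 * (s + 1)) * (u ^ 2 + v ^ 2) ^ 2)
            * (u ^ 2 + v ^ 2) ^ (-s - 4) := by ring
      _ ≤ _ := by gcongr; exact neg_mul_sq_le_quartic hs.le u v
  · calc _ ≤ 2 * s * (2 * s + 2) * ((2 * s + 1) * (2 * s + 3) * (u ^ 2 + v ^ 2) ^ 2)
            * (u ^ 2 + v ^ 2) ^ (-s - 4) := by gcongr; exact quartic_le_mul_sq hs.le u v
      _ = 2 * s * (2 * s + 1) * (2 * s + 2) * (2 * s + 3)
            * ((u ^ 2 + v ^ 2) ^ 2 * (u ^ 2 + v ^ 2) ^ (-s - 4)) := by ring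
      _ ≤ 2 * s * (2 * s + 1) * (2 * s + 2) * (2 * s + 3) * ((u ^ 2 + v ^ 2) ^ (-s) / γ ^ 4) := by
          gcongr
      _ = _ := by ring
end
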